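/- On a pseudo-Hermitian vector space of dimension m ≥ 4, the map π₄ := −(1/(m−2)) σ ∘ J* ∘ τ₁ is a projection from 𝔥₋ onto W₄,₋ := Range(σ), where σ(φ)(x,y;z) := φ(Jx)⟨y,z⟩ − φ(Jy)⟨x,z⟩ + φ(x)⟨Jy,z⟩ − φ(y)⟨Jx,z⟩ and (J*φ)(x) := φ(Jx). -/

import Mathlib

/-- `σ(φ)(x,y;z) := φ(Jx)⟨y,z⟩ − φ(Jy)⟨x,z⟩ + φ(x)⟨Jy,z⟩ − φ(y)⟨Jx,z⟩`. -/
noncomputable def sigmaT {V : Type*} [AddCommGroup V] [Module ℝ V]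
    (B : V →ₗ[ℝ] V →ₗ[ℝ] ℝ) (J : V →ₗ[ℝ] V) (φ : V → ℝ) (x y z : V) : ℝ :=
  φ (J x) * B y z - φ (J y) * B x z + φ x * B (J y) z - φ y * B (J x) z

/-- `τ₁(H)(x) := Σ ε^{ij} H(x,e_i;e_j)`. -/
noncomputable def tauOne {V : Type*} [AddCommGroup V] [Module ℝ V] {m : ℕ}
    (b : Module.Basis (Fin m) ℝ V) (Einv : Matrix (Fin m) (Fin m) ℝ)
    (H : V → V → V → ℝ) (x : V) : ℝ :=
  ∑ i, ∑ j, Einv i j * H x (b i) (b j)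

/-- `π₄ := -(1/(m-2)) σ ∘ J^* ∘ τ₁`. -/
noncomputable def piFour {V : Type*} [AddCommGroup V] [Module ℝ V] {m : ℕ}
    (B : V →ₗ[ℝ] V →ₗ[ℝ] ℝ) (J : V →ₗ[ℝ] V)
    (b : Module.Basis (Fin m) ℝ V) (Einv : Matrix (Fin m) (Fin m) ℝ)
    (H : V → V → V → ℝ) (x y z : V) : ℝ :=
  -(1/((m : ℝ) - 2)) * sigmaT B J (fun v => tauOne b Einv H (J v)) x y z

/-! The only computation is `τ₁(σφ) = (m - 2) J*φ`: contracting each of the four terms of `σφ`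
with the inverse Gram matrix `ε` yields `m φ(Jx)`, `-φ(Jx)`, `φ(x) · Σ ε^{ij}⟨Je_i, e_j⟩ = 0`
(a symmetric matrix paired with an antisymmetric one) and `-φ(Jx)`.  Since `J*J* = -id`, this
makes `π₄ ∘ σ` the identity, while `π₄H` is in the range of `σ` by construction. -/

section InverseGram

variable {R V ι : Type*} [CommRing R] [AddCommGroup V] [Module R V] [Fintype ι] [DecidableEq ι]
  {B : V →ₗ[R] V →ₗ[R] R} {b : Module.Basis ι R V} {E : Matrix ι ι R}

theorem sum_inverseGram_mul_apply (hE : E * Matrix.of (fun i j => B (b i) (b j)) = 1)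
    (i : ι) (w : V) : ∑ j, E i j * B (b j) w = b.repr w i := by
  suffices h : ∑ j, E i j • B (b j) = b.coord i from by
    simpa using LinearMap.congr_fun h w
  refine b.ext fun k => ?_
  have := congr_fun (congr_fun hE i) k
  simp only [Matrix.mul_apply, Matrix.of_apply, Matrix.one_apply] at this
  simp [this, Finsupp.single_apply, eq_comm]

theorem sum_inverseGram_contract (hE : E * Matrix.of (fun i j => B (b i) (b j)) = 1)
    (f : V →ₗ[R] R) (w : V) : ∑ i, ∑ j, E i j * (f (b i) * B (b j) w) = f w := by
  calc ∑ i, ∑ j, E i j * (f (b i) * B (b j) w)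
      = ∑ i, b.repr w i * f (b i) := by
        refine Finset.sum_congr rfl fun i _ => ?_
        rw [← sum_inverseGram_mul_apply hE i w, Finset.sum_mul]
        exact Finset.sum_congr rfl fun j _ => by ring
    _ = f w := by
        conv_rhs => rw [← b.sum_repr w, map_sum]
        simp only [map_smul, smul_eq_mul]

theorem sum_inverseGram_trace (hE : E * Matrix.of (fun i j => B (b i) (b j)) = 1) :
    ∑ i, ∑ j, E i j * B (b j) (b i) = Fintype.card ι := by
  simp [sum_inverseGram_mul_apply hE]

theorem inverseGram_isSymm (hB : ∀ x y, B x y = B y x)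
    (hE : E * Matrix.of (fun i j => B (b i) (b j)) = 1) : E.IsSymm := by
  rw [← Matrix.inv_eq_left_inv hE]
  exact Matrix.IsSymm.inv (Matrix.IsSymm.ext fun i j => hB (b j) (b i))

end InverseGram

theorem Matrix.IsSymm.sum_mul_of_antisymm_eq_zero {ι : Type*} [Fintype ι] {E A : Matrix ι ι ℝ}
    (hE : E.IsSymm) (hA : ∀ i j, A i j = -A j i) : ∑ i, ∑ j, E i j * A i j = 0 := by
  have h : ∑ i, ∑ j, E i j * A i j = -∑ i, ∑ j, E i j * A i j := by
    conv_lhs => rw [Finset.sum_comm]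
    simp only [← Finset.sum_neg_distrib]
    refine Finset.sum_congr rfl fun j _ => Finset.sum_congr rfl fun i _ => ?_
    rw [hE.apply j i, hA]
    ring
  linarith

section PseudoHermitian

variable {V : Type*} [AddCommGroup V] [Module ℝ V] {B : V →ₗ[ℝ] V →ₗ[ℝ] ℝ} {J : V →ₗ[ℝ] V}

theorem sigmaT_const_mul (c : ℝ) (φ : V → ℝ) (x y z : V) :
    sigmaT B J (fun v => c * φ v) x y z = c * sigmaT B J φ x y z := by
  simp only [sigmaT]
  ring

theorem apply_J_left_eq_neg (hB : ∀ x y, B x y = B y x) (hJ2 : ∀ x, J (J x) = -x)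
    (hJB : ∀ x y, B (J x) (J y) = B x y) (u v : V) : B (J u) v = -B (J v) u := by
  rw [← hJB (J u) v, hJ2, map_neg, LinearMap.neg_apply, hB u]

theorem tauOne_sigmaT {m : ℕ} (hB : ∀ x y, B x y = B y x) (hJ2 : ∀ x, J (J x) = -x)
    (hJB : ∀ x y, B (J x) (J y) = B x y) (b : Module.Basis (Fin m) ℝ V)
    {E : Matrix (Fin m) (Fin m) ℝ} (hE : E * Matrix.of (fun i j => B (b i) (b j)) = 1)
    (φ : V →ₗ[ℝ] ℝ) (x : V) :
    tauOne b E (sigmaT B J φ) x = ((m : ℝ) - 2) * φ (J x) := by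
  have hJ_trace : ∑ i, ∑ j, E i j * B (J (b i)) (b j) = 0 :=
    (inverseGram_isSymm hB hE).sum_mul_of_antisymm_eq_zero fun _ _ =>
      apply_J_left_eq_neg hB hJ2 hJB _ _
  have hexpand : tauOne b E (sigmaT B J φ) x
      = φ (J x) * (∑ i, ∑ j, E i j * B (b j) (b i))
        - ∑ i, ∑ j, E i j * ((φ ∘ₗ J) (b i) * B (b j) x)
        + φ x * ∑ i, ∑ j, E i j * B (J (b i)) (b j)
        - ∑ i, ∑ j, E i j * (φ (b i) * B (b j) (J x)) := by
    simp only [tauOne, sigmaT, LinearMap.comp_apply, Finset.mul_sum,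
      ← Finset.sum_sub_distrib, ← Finset.sum_add_distrib]
    refine Finset.sum_congr rfl fun i _ => Finset.sum_congr rfl fun j _ => ?_
    rw [hB (b i), hB x, hB (J x)]
    ring
  rw [hexpand, sum_inverseGram_trace hE, hJ_trace, sum_inverseGram_contract hE,
    sum_inverseGram_contract hE, Fintype.card_fin, LinearMap.comp_apply]
  ring

theorem exists_linearMap_eq_tauOne {m : ℕ} (b : Module.Basis (Fin m) ℝ V)
    (E : Matrix (Fin m) (Fin m) ℝ) (H : V →ₗ[ℝ] V →ₗ[ℝ] V →ₗ[ℝ] ℝ) :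
    ∃ τ : V →ₗ[ℝ] ℝ, ∀ x, τ x = tauOne b E (fun a c d => H a c d) x :=
  ⟨∑ i, ∑ j, E i j • (H.flip (b i)).flip (b j), fun x => by simp [tauOne]⟩

end PseudoHermitian

theorem stmt_11_general {V : Type*} [AddCommGroup V] [Module ℝ V] {m : ℕ} (hm : 4 ≤ m)
    (B : V →ₗ[ℝ] V →ₗ[ℝ] ℝ) (J : V →ₗ[ℝ] V)
    (hBsymm : ∀ x y, B x y = B y x)
    (hJ2 : ∀ x, J (J x) = -x)
    (hJB : ∀ x y, B (J x) (J y) = B x y)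
    (b : Module.Basis (Fin m) ℝ V)
    (Einv : Matrix (Fin m) (Fin m) ℝ)
    (hE1 : Einv * (Matrix.of fun i j => B (b i) (b j)) = 1) :
    (∀ H : V →ₗ[ℝ] V →ₗ[ℝ] V →ₗ[ℝ] ℝ,
      (∀ x y z, H x y z = - H y x z) →
      (∀ x y z, H (J x) (J y) z = - H x y z) →
      ∃ ψ : V →ₗ[ℝ] ℝ, ∀ x y z,
        piFour B J b Einv (fun a c d => H a c d) x y z = sigmaT B J ψ x y z) ∧
    (∀ φ : V →ₗ[ℝ] ℝ, ∀ x y z,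
      piFour B J b Einv (sigmaT B J φ) x y z = sigmaT B J φ x y z) := by
  refine ⟨fun H _ _ => ?_, fun φ x y z => ?_⟩
  · obtain ⟨τ, hτ⟩ := exists_linearMap_eq_tauOne b Einv H
    refine ⟨-(1 / ((m : ℝ) - 2)) • τ ∘ₗ J, fun x y z => ?_⟩
    have hψ : ⇑(-(1 / ((m : ℝ) - 2)) • τ ∘ₗ J)
        = fun v => -(1 / ((m : ℝ) - 2)) * tauOne b Einv (fun a c d => H a c d) (J v) :=
      funext fun v => by simp [hτ]
    rw [piFour, ← sigmaT_const_mul, hψ]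
  · have hm2 : (m : ℝ) - 2 ≠ 0 := by
      have : (4 : ℝ) ≤ m := by exact_mod_cast hm
      linarith
    have hτJ : ∀ v, tauOne b Einv (sigmaT B J φ) (J v) = -((m : ℝ) - 2) * φ v := fun v => by
      rw [tauOne_sigmaT hBsymm hJ2 hJB b hE1, hJ2, map_neg]
      ring
    simp only [piFour, hτJ, sigmaT_const_mul, ← mul_assoc]
    field_simp

/-- On a pseudo-Hermitian vector space of dimension `m ≥ 4`, `π₄` is a projection from
`𝔥₋` onto `W₄,₋ = Range(σ)`: for `H ∈ 𝔥₋`, `π₄H` lies in the range of `σ` (over linear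
functionals `φ`), and `π₄(σφ) = σφ` for every linear functional `φ`. -/
theorem stmt_11 {V : Type*} [AddCommGroup V] [Module ℝ V] {m : ℕ} (hm : 4 ≤ m)
    (B : V →ₗ[ℝ] V →ₗ[ℝ] ℝ) (J : V →ₗ[ℝ] V)
    (hBsymm : ∀ x y, B x y = B y x)
    (hBnd : ∀ x, (∀ y, B x y = 0) → x = 0)
    (hJ2 : ∀ x, J (J x) = -x)
    (hJB : ∀ x y, B (J x) (J y) = B x y)
    (b : Module.Basis (Fin m) ℝ V)
    (Einv : Matrix (Fin m) (Fin m) ℝ)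
    (hE1 : Einv * (Matrix.of fun i j => B (b i) (b j)) = 1)
    (hE2 : (Matrix.of fun i j => B (b i) (b j)) * Einv = 1) :
    (∀ H : V →ₗ[ℝ] V →ₗ[ℝ] V →ₗ[ℝ] ℝ,
      (∀ x y z, H x y z = - H y x z) →
      (∀ x y z, H (J x) (J y) z = - H x y z) →
      ∃ ψ : V →ₗ[ℝ] ℝ, ∀ x y z,
        piFour B J b Einv (fun a c d => H a c d) x y z = sigmaT B J ψ x y z) ∧
    (∀ φ : V →ₗ[ℝ] ℝ, ∀ x y z,
      piFour B J b Einv (sigmaT B J φ) x y z = sigmaT B J φ x y z) :=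
  stmt_11_general hm B J hBsymm hJ2 hJB b Einv hE1
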